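/- arXiv:2403.05322 — 5 statements merged into one kernel-verified Lean document; each statement's English description precedes it below -/
import Mathlib

section
/- If f is L-smooth and at iteration k of a direct-search method the sufficient decrease condition fails for every poll direction (i.e., f(x_k + α_k d) ≥ f(x_k) - ρ(α_k) for all d ∈ D_k with α_k > 0), then for every d ∈ D_k one has -⟨∇f(x_k), d⟩ ≤ α_k·L·‖d‖²/2 + ρ(α_k)/α_k. -/
/-!
The descent lemma: for `t ≥ 0` the function `t ↦ f (x + t • s) - t ⟪∇f x, s⟫ - (L/2) t² ‖s‖²`
has derivative `⟪∇f (x + t • s) - ∇f x, s⟫ - L t ‖s‖² ≤ 0` (Cauchy–Schwarz and the Lipschitz bound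
on the gradient), so it is antitone on `[0, ∞)` and its value at `1` is at most its value `f x`
at `0`. Taking `s = α • d` and comparing with the failed sufficient decrease condition gives
`-α ⟪∇f x, d⟫ ≤ (L/2) α² ‖d‖² + ρ α`; divide by `α > 0`.
-/

local notation "⟪" x ", " y "⟫" => @inner ℝ _ _ x y

section DescentLemma

variable {E : Type*} [NormedAddCommGroup E] [InnerProductSpace ℝ E] [CompleteSpace E]

theorem HasGradientAt.hasDerivAt_comp_add_smul {f : E → ℝ} {x s v : E} {t : ℝ}
    (hf : HasGradientAt f v (x + t • s)) :
    HasDerivAt (fun τ : ℝ => f (x + τ • s)) ⟪v, s⟫ t := by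
  have hline : HasDerivAt (fun τ : ℝ => x + τ • s) s t := by
    simpa using ((hasDerivAt_id t).smul_const s).const_add x
  exact hf.hasFDerivAt.comp_hasDerivAt t hline

theorem le_add_inner_add_of_lipschitz_gradient {f : E → ℝ} {g : E → E} {L : ℝ}
    (hgrad : ∀ y, HasGradientAt f (g y) y) (hlip : ∀ y z, ‖g y - g z‖ ≤ L * ‖y - z‖)
    (x s : E) : f (x + s) ≤ f x + ⟪g x, s⟫ + L / 2 * ‖s‖ ^ 2 := by
  set φ : ℝ → ℝ := fun t => f (x + t • s) - t * ⟪g x, s⟫ - L / 2 * t ^ 2 * ‖s‖ ^ 2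
  have hφ : ∀ t, HasDerivAt φ (⟪g (x + t • s) - g x, s⟫ - L * t * ‖s‖ ^ 2) t := by
    intro t
    refine (((hgrad (x + t • s)).hasDerivAt_comp_add_smul.sub
      ((hasDerivAt_id t).mul_const ⟪g x, s⟫)).sub
      (((hasDerivAt_pow 2 t).const_mul (L / 2)).mul_const (‖s‖ ^ 2))).congr_deriv ?_
    rw [inner_sub_left]
    ring
  have hφ'_nonpos : ∀ t ∈ interior (Set.Ici (0 : ℝ)),
      ⟪g (x + t • s) - g x, s⟫ - L * t * ‖s‖ ^ 2 ≤ 0 := by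
    intro t ht
    rw [interior_Ici] at ht
    calc ⟪g (x + t • s) - g x, s⟫ - L * t * ‖s‖ ^ 2
        ≤ ‖g (x + t • s) - g x‖ * ‖s‖ - L * t * ‖s‖ ^ 2 := by
          gcongr; exact real_inner_le_norm _ _
      _ ≤ L * ‖(x + t • s) - x‖ * ‖s‖ - L * t * ‖s‖ ^ 2 := by
          gcongr; exact hlip _ _
      _ = 0 := by
          rw [add_sub_cancel_left, norm_smul, Real.norm_of_nonneg (le_of_lt ht)]; ring
  have hanti : AntitoneOn φ (Set.Ici 0) :=
    antitoneOn_of_hasDerivWithinAt_nonpos (convex_Ici 0)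
      (fun t _ => (hφ t).continuousAt.continuousWithinAt)
      (fun t _ => (hφ t).hasDerivWithinAt) hφ'_nonpos
  have hφ₁ : φ 1 ≤ φ 0 := hanti Set.self_mem_Ici (Set.mem_Ici.2 zero_le_one) zero_le_one
  simp only [φ, one_smul, zero_smul, add_zero, one_mul, one_pow, zero_mul, sub_zero,
    ne_eq, OfNat.ofNat_ne_zero, not_false_eq_true, zero_pow, mul_zero] at hφ₁
  linarith

end DescentLemma

theorem stmt0_general {n : ℕ} (f : EuclideanSpace ℝ (Fin n) → ℝ)
    (g : EuclideanSpace ℝ (Fin n) → EuclideanSpace ℝ (Fin n))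
    (L : ℝ)
    (hgrad : ∀ y, HasGradientAt f (g y) y)
    (hlip : ∀ y z, ‖g y - g z‖ ≤ L * ‖y - z‖)
    (x : EuclideanSpace ℝ (Fin n)) (α : ℝ) (hα : 0 < α)
    (D : Finset (EuclideanSpace ℝ (Fin n)))
    (ρ : ℝ → ℝ)
    (hfail : ∀ d ∈ D, f x - ρ α ≤ f (x + α • d)) :
    ∀ d ∈ D, -⟪g x, d⟫ ≤ α * L * ‖d‖ ^ 2 / 2 + ρ α / α := by
  intro d hd
  have hdescent := le_add_inner_add_of_lipschitz_gradient hgrad hlip x (α • d)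
  rw [real_inner_smul_right, norm_smul, Real.norm_of_nonneg hα.le] at hdescent
  have hscaled : α * -⟪g x, d⟫ ≤ α * (α * L * ‖d‖ ^ 2 / 2 + ρ α / α) := by
    rw [mul_add, mul_div_cancel₀ _ hα.ne']
    linarith [hfail d hd]
  exact le_of_mul_le_mul_left hscaled hα

/-- descent-lemma consequence of an unsuccessful direct-search iteration:
if `f` is `L`-smooth and sufficient decrease fails along every poll direction, then
`-⟪∇f(x_k), d⟫ ≤ α_k L ‖d‖²/2 + ρ(α_k)/α_k` for every poll direction `d`. -/
theorem stmt0 {n : ℕ} (f : EuclideanSpace ℝ (Fin n) → ℝ)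
    (g : EuclideanSpace ℝ (Fin n) → EuclideanSpace ℝ (Fin n))
    (L : ℝ) (hL : 0 ≤ L)
    (hgrad : ∀ y, HasGradientAt f (g y) y)
    (hlip : ∀ y z, ‖g y - g z‖ ≤ L * ‖y - z‖)
    (x : EuclideanSpace ℝ (Fin n)) (α : ℝ) (hα : 0 < α)
    (D : Finset (EuclideanSpace ℝ (Fin n)))
    (ρ : ℝ → ℝ) (hρ : ∀ a, 0 ≤ ρ a)
    (hfail : ∀ d ∈ D, f x - ρ α ≤ f (x + α • d)) :
    ∀ d ∈ D, -⟪g x, d⟫ ≤ α * L * ‖d‖ ^ 2 / 2 + ρ α / α :=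
  stmt0_general f g L hgrad hlip x α hα D ρ hfail
end

section
/- Let f be L-smooth, let D_k be a finite set of nonzero directions with norms in [d_min, d_max] whose cosine measure satisfies cm(D_k) ≥ τ > 0, and suppose f(x_k + α_k d) ≥ f(x_k) - ρ(α_k) for all d ∈ D_k with α_k > 0. Then ‖∇f(x_k)‖ ≤ (1/τ)·(α_k·L·d_max/2 + ρ(α_k)/(α_k·d_min)). -/
local notation "⟪" x ", " y "⟫" => @inner ℝ _ _ x y

/-- The cosine measure of a finite set of directions:
`cm(D) = inf_{v ≠ 0} sup_{d ∈ D} ⟪d, v⟫ / (‖d‖ ‖v‖)`. -/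
noncomputable def cosMeasure {n : ℕ} (D : Finset (EuclideanSpace ℝ (Fin n))) : ℝ :=
  ⨅ v : {v : EuclideanSpace ℝ (Fin n) // v ≠ 0},
    ⨆ d : D, ⟪(d : EuclideanSpace ℝ (Fin n)), (v : EuclideanSpace ℝ (Fin n))⟫ /
      (‖(d : EuclideanSpace ℝ (Fin n))‖ * ‖(v : EuclideanSpace ℝ (Fin n))‖)

/-!
Choose `d ∈ D` with `⟪d, -∇f x⟫ ≥ τ ‖d‖ ‖∇f x‖`, which the cosine measure provides. The descent
lemma `f (x + α d) ≤ f x + α ⟪∇f x, d⟫ + L α² ‖d‖² / 2` together with the failed sufficient decrease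
`f (x + α d) ≥ f x - ρ α` gives `τ α ‖d‖ ‖∇f x‖ ≤ ρ α + L α² ‖d‖² / 2`; divide by `α ‖d‖` and use
`dmin ≤ ‖d‖ ≤ dmax`.
-/

open Set

section Descent

variable {E : Type*} [NormedAddCommGroup E] [NormedSpace ℝ E] {f : E → ℝ} {L : ℝ}

theorem image_add_le_of_hasFDerivAt_of_lipschitz {f' : E → E →L[ℝ] ℝ}
    (hf : ∀ y, HasFDerivAt f (f' y) y) (hlip : ∀ y z, ‖f' y - f' z‖ ≤ L * ‖y - z‖) (x u : E) :
    f (x + u) ≤ f x + f' x u + L / 2 * ‖u‖ ^ 2 := by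
  -- `f (x + t u)` minus its quadratic upper model; the Lipschitz bound makes `φ' ≤ 0`.
  set φ : ℝ → ℝ := fun t => f (x + t • u) - t * f' x u - L / 2 * t ^ 2 * ‖u‖ ^ 2
  have hφ (t : ℝ) : HasDerivAt φ (f' (x + t • u) u - f' x u - L * t * ‖u‖ ^ 2) t := by
    have hline : HasDerivAt (fun s : ℝ => x + s • u) u t := by
      simpa using ((hasDerivAt_id t).smul_const u).const_add x
    exact (((hf _).comp_hasDerivAt t hline).sub ((hasDerivAt_id t).mul_const (f' x u))).sub
      (((hasDerivAt_pow 2 t).const_mul (L / 2)).mul_const (‖u‖ ^ 2)) |>.congr_deriv (by ring)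
  have hφ'_nonpos (t : ℝ) (ht : 0 ≤ t) : f' (x + t • u) u - f' x u - L * t * ‖u‖ ^ 2 ≤ 0 := by
    have : (f' (x + t • u) - f' x) u ≤ L * t * ‖u‖ ^ 2 :=
      calc (f' (x + t • u) - f' x) u ≤ ‖f' (x + t • u) - f' x‖ * ‖u‖ :=
            (le_abs_self _).trans ((f' (x + t • u) - f' x).le_opNorm u)
        _ ≤ L * ‖t • u‖ * ‖u‖ := by
            gcongr
            simpa using hlip (x + t • u) x
        _ = L * t * ‖u‖ ^ 2 := by rw [norm_smul, Real.norm_of_nonneg ht]; ring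
    rw [sub_apply] at this
    linarith
  have hanti : AntitoneOn φ (Ici 0) :=
    antitoneOn_of_hasDerivWithinAt_nonpos (convex_Ici 0)
      (fun t _ => (hφ t).continuousAt.continuousWithinAt) (fun t _ => (hφ t).hasDerivWithinAt)
      (fun t ht => hφ'_nonpos t (interior_subset ht))
  have := hanti self_mem_Ici (mem_Ici.2 zero_le_one) zero_le_one
  simp only [φ, zero_smul, one_smul, add_zero] at this
  linarith

variable {F : Type*} [NormedAddCommGroup F] [InnerProductSpace ℝ F] [CompleteSpace F]

theorem image_add_le_of_hasGradientAt_of_lipschitz {f : F → ℝ} {g : F → F}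
    (hf : ∀ y, HasGradientAt f (g y) y) (hlip : ∀ y z, ‖g y - g z‖ ≤ L * ‖y - z‖) (x u : F) :
    f (x + u) ≤ f x + ⟪g x, u⟫ + L / 2 * ‖u‖ ^ 2 :=
  image_add_le_of_hasFDerivAt_of_lipschitz (f' := fun y => InnerProductSpace.toDual ℝ F (g y))
    (fun y => (hf y).hasFDerivAt)
    (fun y z => by rw [← map_sub, LinearIsometryEquiv.norm_map]; exact hlip y z) x u

end Descent

section CosineMeasure

variable {n : ℕ} {D : Finset (EuclideanSpace ℝ (Fin n))} {τ : ℝ}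

theorem neg_one_le_iSup_cos (D : Finset (EuclideanSpace ℝ (Fin n)))
    (v : EuclideanSpace ℝ (Fin n)) :
    -1 ≤ ⨆ d : D,
      ⟪(d : EuclideanSpace ℝ (Fin n)), v⟫ / (‖(d : EuclideanSpace ℝ (Fin n))‖ * ‖v‖) := by
  rcases isEmpty_or_nonempty D with hD | ⟨⟨d⟩⟩
  · rw [Real.iSup_of_isEmpty]; norm_num
  · exact le_ciSup_of_le (finite_range _).bddAbove d
      (neg_le_of_abs_le (abs_real_inner_div_norm_mul_norm_le_one _ _))

theorem le_iSup_cos_of_le_cosMeasure (hcm : τ ≤ cosMeasure D) {v : EuclideanSpace ℝ (Fin n)}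
    (hv : v ≠ 0) :
    τ ≤ ⨆ d : D, ⟪(d : EuclideanSpace ℝ (Fin n)), v⟫ / (‖(d : EuclideanSpace ℝ (Fin n))‖ * ‖v‖) :=
  hcm.trans <| ciInf_le ⟨-1, by rintro _ ⟨w, rfl⟩; exact neg_one_le_iSup_cos D w.1⟩
    (⟨v, hv⟩ : {w : EuclideanSpace ℝ (Fin n) // w ≠ 0})

theorem exists_mem_mul_norm_le_inner_of_le_cosMeasure_of_ne_zero (hτ : 0 < τ)
    (hcm : τ ≤ cosMeasure D) {v : EuclideanSpace ℝ (Fin n)} (hv : v ≠ 0) :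
    ∃ d ∈ D, d ≠ 0 ∧ τ * (‖d‖ * ‖v‖) ≤ ⟪d, v⟫ := by
  have hsup := le_iSup_cos_of_le_cosMeasure hcm hv
  have : Nonempty D := by
    by_contra! hD
    rw [Real.iSup_of_isEmpty] at hsup
    linarith
  obtain ⟨⟨d, hd⟩, hmax⟩ := exists_eq_ciSup_of_finite (f := fun d : D =>
    ⟪(d : EuclideanSpace ℝ (Fin n)), v⟫ / (‖(d : EuclideanSpace ℝ (Fin n))‖ * ‖v‖))
  rw [← hmax] at hsup
  have hd0 : d ≠ 0 := by
    rintro rfl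
    simp only [inner_zero_left, zero_div] at hsup
    linarith
  exact ⟨d, hd, hd0, (le_div_iff₀ (by positivity)).1 hsup⟩

theorem exists_mem_mul_norm_le_inner_of_le_cosMeasure (hτ : 0 < τ) (hcm : τ ≤ cosMeasure D)
    (v : EuclideanSpace ℝ (Fin n)) : ∃ d ∈ D, d ≠ 0 ∧ τ * (‖d‖ * ‖v‖) ≤ ⟪d, v⟫ := by
  by_cases hv : v = 0
  · obtain ⟨w, hw⟩ : ∃ w : EuclideanSpace ℝ (Fin n), w ≠ 0 := by
      by_contra! h
      have : IsEmpty {w : EuclideanSpace ℝ (Fin n) // w ≠ 0} := ⟨fun w => w.2 (h w)⟩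
      -- an empty infimum in `ℝ` is `0`
      rw [cosMeasure, Real.iInf_of_isEmpty] at hcm
      linarith
    obtain ⟨d, hd, hd0, -⟩ := exists_mem_mul_norm_le_inner_of_le_cosMeasure_of_ne_zero hτ hcm hw
    exact ⟨d, hd, hd0, by simp [hv]⟩
  · exact exists_mem_mul_norm_le_inner_of_le_cosMeasure_of_ne_zero hτ hcm hv

end CosineMeasure

theorem stmt1_general {n : ℕ} (f : EuclideanSpace ℝ (Fin n) → ℝ)
    (g : EuclideanSpace ℝ (Fin n) → EuclideanSpace ℝ (Fin n))
    (L : ℝ) (hL : 0 ≤ L)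
    (hgrad : ∀ y, HasGradientAt f (g y) y)
    (hlip : ∀ y z, ‖g y - g z‖ ≤ L * ‖y - z‖)
    (x : EuclideanSpace ℝ (Fin n)) (α : ℝ) (hα : 0 < α)
    (D : Finset (EuclideanSpace ℝ (Fin n)))
    (dmin dmax : ℝ) (hdmin : 0 < dmin)
    (hnorm : ∀ d ∈ D, dmin ≤ ‖d‖ ∧ ‖d‖ ≤ dmax)
    (τ : ℝ) (hτ : 0 < τ) (hcm : τ ≤ cosMeasure D)
    (ρ : ℝ → ℝ) (hρ : ∀ a, 0 ≤ ρ a)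
    (hfail : ∀ d ∈ D, f x - ρ α ≤ f (x + α • d)) :
    ‖g x‖ ≤ (1 / τ) * (α * L * dmax / 2 + ρ α / (α * dmin)) := by
  obtain ⟨d, hdD, hd0, hcos⟩ := exists_mem_mul_norm_le_inner_of_le_cosMeasure hτ hcm (-g x)
  obtain ⟨hdmin_le, hle_dmax⟩ := hnorm d hdD
  have hdescent := image_add_le_of_hasGradientAt_of_lipschitz hgrad hlip x (α • d)
  rw [real_inner_smul_right, norm_smul, Real.norm_of_nonneg hα.le] at hdescent
  rw [norm_neg, inner_neg_right, real_inner_comm] at hcos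
  have hstep : 0 < α * ‖d‖ := mul_pos hα (norm_pos_iff.2 hd0)
  have hdecrease : τ * ‖g x‖ * (α * ‖d‖) ≤ ρ α + L / 2 * (α * ‖d‖) ^ 2 := by
    linarith [mul_le_mul_of_nonneg_left hcos hα.le, hfail d hdD]
  rw [one_div_mul_eq_div, le_div_iff₀' hτ]
  calc τ * ‖g x‖ ≤ (ρ α + L / 2 * (α * ‖d‖) ^ 2) / (α * ‖d‖) := (le_div_iff₀ hstep).2 hdecrease
    _ = ρ α / (α * ‖d‖) + α * L * ‖d‖ / 2 := by field_simp
    _ ≤ ρ α / (α * dmin) + α * L * dmax / 2 := by gcongr; exact hρ α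
    _ = α * L * dmax / 2 + ρ α / (α * dmin) := add_comm _ _

/-- gradient-norm bound at an unsuccessful iteration of direct search,
when the poll set has cosine measure at least `τ > 0` and direction norms in `[dmin, dmax]`. -/
theorem stmt1 {n : ℕ} (f : EuclideanSpace ℝ (Fin n) → ℝ)
    (g : EuclideanSpace ℝ (Fin n) → EuclideanSpace ℝ (Fin n))
    (L : ℝ) (hL : 0 ≤ L)
    (hgrad : ∀ y, HasGradientAt f (g y) y)
    (hlip : ∀ y z, ‖g y - g z‖ ≤ L * ‖y - z‖)
    (x : EuclideanSpace ℝ (Fin n)) (α : ℝ) (hα : 0 < α)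
    (D : Finset (EuclideanSpace ℝ (Fin n)))
    (dmin dmax : ℝ) (hdmin : 0 < dmin)
    (hnorm : ∀ d ∈ D, dmin ≤ ‖d‖ ∧ ‖d‖ ≤ dmax)
    (hD0 : ∀ d ∈ D, d ≠ 0)
    (τ : ℝ) (hτ : 0 < τ) (hcm : τ ≤ cosMeasure D)
    (ρ : ℝ → ℝ) (hρ : ∀ a, 0 ≤ ρ a)
    (hfail : ∀ d ∈ D, f x - ρ α ≤ f (x + α • d)) :
    ‖g x‖ ≤ (1 / τ) * (α * L * dmax / 2 + ρ α / (α * dmin)) :=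
  stmt1_general f g L hL hgrad hlip x α hα D dmin dmax hdmin hnorm τ hτ hcm ρ hρ hfail
end

section
/- A finite set D of nonzero vectors in ℝⁿ has positive cosine measure if and only if every vector in ℝⁿ can be written as a nonnegative linear combination of vectors in D (i.e., D is a positive spanning set). -/
/-!
A positive cosine measure says exactly that every nonzero `v` makes an acute angle with some
`d ∈ D`: the infimum over the unit sphere of the continuous function `v ↦ max_d ⟪d, v⟫ / ‖d‖`
is attained, hence positive. By Farkas' lemma this condition forces the cone generated by `D` to
be dense, and a dense convex set in finite dimensions is the whole space: its affine span is
closed, hence everything, so it has interior points and its interior is that of its closure.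
-/

local notation "⟪" x ", " y "⟫" => @inner ℝ _ _ x y

open Set

theorem PointedCone.mem_hull_finset_iff {R E : Type*} [Semiring R] [PartialOrder R]
    [IsOrderedRing R] [AddCommMonoid E] [Module R E] {D : Finset E} {v : E} :
    v ∈ PointedCone.hull R (D : Set E) ↔
      ∃ c : E → R, (∀ d ∈ D, 0 ≤ c d) ∧ v = ∑ d ∈ D, c d • d := by
  constructor
  · intro hv
    obtain ⟨c, -, rfl⟩ := Submodule.mem_span_finset.1 hv
    exact ⟨fun d => c d, fun d _ => (c d).2, rfl⟩
  · rintro ⟨c, hc, rfl⟩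
    exact Submodule.sum_mem _ fun d hd =>
      Submodule.smul_mem _ (⟨c d, hc d hd⟩ : {r : R // 0 ≤ r}) (PointedCone.subset_hull hd)

theorem Convex.eq_univ_of_dense {V : Type*} [NormedAddCommGroup V] [NormedSpace ℝ V]
    [FiniteDimensional ℝ V] {s : Set V} (hs : Convex ℝ s) (hd : Dense s) : s = univ := by
  have hclosed : IsClosed (affineSpan ℝ s : Set V) :=
    (AffineSubspace.isClosed_direction_iff _).1 (Submodule.closed_of_finiteDimensional _)
  have hspan : affineSpan ℝ s = ⊤ := by
    rw [← AffineSubspace.coe_eq_univ_iff, ← univ_subset_iff, ← hd.closure_eq]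
    exact hclosed.closure_subset_iff.2 (subset_affineSpan ℝ s)
  have hint := hs.interior_closure_eq_interior_of_nonempty_interior
    (hs.interior_nonempty_iff_affineSpan_eq_top.2 hspan)
  rw [hd.closure_eq, interior_univ] at hint
  exact eq_univ_of_univ_subset (hint ▸ interior_subset)

section InnerProductSpace

variable {E : Type*} [NormedAddCommGroup E] [InnerProductSpace ℝ E]

theorem PointedCone.dense_hull_of_forall_exists_inner_pos [CompleteSpace E] {s : Set E}
    (hs : ∀ v ≠ 0, ∃ d ∈ s, 0 < ⟪d, v⟫) : Dense (PointedCone.hull ℝ s : Set E) := by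
  intro b
  by_contra hb
  obtain ⟨y, hy, hby⟩ :=
    ProperCone.hyperplane_separation' (Submodule.closure (PointedCone.hull ℝ s)) hb
  have hy0 : y ≠ 0 := by
    rintro rfl
    simp at hby
  obtain ⟨d, hd, hdy⟩ := hs (-y) (neg_ne_zero.2 hy0)
  have hyd := hy d (subset_closure (PointedCone.subset_hull hd))
  rw [inner_neg_right] at hdy
  linarith

theorem PointedCone.hull_eq_top_iff_forall_exists_inner_pos [FiniteDimensional ℝ E]
    {s : Set E} : PointedCone.hull ℝ s = ⊤ ↔ ∀ v ≠ 0, ∃ d ∈ s, 0 < ⟪d, v⟫ := by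
  constructor
  · intro htop v hv
    by_contra! hs
    have hle : PointedCone.hull ℝ s ≤ ProperCone.innerDual {-v} :=
      Submodule.span_le.2 fun d hd => by simpa [inner_neg_left, real_inner_comm] using hs d hd
    have hvv : 0 ≤ ⟪-v, v⟫ :=
      ProperCone.mem_innerDual.1 (hle (htop ▸ Submodule.mem_top)) (mem_singleton _)
    rw [inner_neg_left, neg_nonneg] at hvv
    exact hv (real_inner_self_nonpos.1 hvv)
  · intro hs
    exact SetLike.coe_injective ((PointedCone.convex _).eq_univ_of_dense
      (PointedCone.dense_hull_of_forall_exists_inner_pos hs))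

end InnerProductSpace

theorem continuous_ciSup_of_fintype {ι X L : Type*} [Fintype ι] [Nonempty ι] [TopologicalSpace X]
    [ConditionallyCompleteLattice L] [TopologicalSpace L] [ContinuousSup L] {f : ι → X → L}
    (hf : ∀ i, Continuous (f i)) : Continuous fun x => ⨆ i, f i x := by
  simp_rw [← Finset.sup'_univ_eq_ciSup]
  exact Continuous.finset_sup'_apply _ fun i _ => hf i

section CosMeasure

variable {n : ℕ} {D : Finset (EuclideanSpace ℝ (Fin n))}

theorem cosMeasure_nonpos_of_forall_inner_nonpos {v : EuclideanSpace ℝ (Fin n)} (hv : v ≠ 0)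
    (hD : ∀ d ∈ D, ⟪d, v⟫ ≤ 0) : cosMeasure D ≤ 0 :=
  Real.iInf_nonpos' ⟨⟨v, hv⟩, Real.iSup_nonpos fun d =>
    div_nonpos_of_nonpos_of_nonneg (hD d d.2) (by positivity)⟩

theorem cosMeasure_pos_of_forall_exists_inner_pos (hn : 0 < n)
    (hD : ∀ v ≠ 0, ∃ d ∈ D, 0 < ⟪d, v⟫) : 0 < cosMeasure D := by
  have : Nonempty (Fin n) := Fin.pos_iff_nonempty.mp hn
  obtain ⟨v₀, hv₀⟩ := exists_ne (0 : EuclideanSpace ℝ (Fin n))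
  have : Nonempty {v : EuclideanSpace ℝ (Fin n) // v ≠ 0} := ⟨⟨v₀, hv₀⟩⟩
  have : Nonempty D := by
    obtain ⟨d, hd, -⟩ := hD v₀ hv₀
    exact ⟨⟨d, hd⟩⟩
  set g : EuclideanSpace ℝ (Fin n) → ℝ := fun v =>
    ⨆ d : D, ⟪(d : EuclideanSpace ℝ (Fin n)), v⟫ / ‖(d : EuclideanSpace ℝ (Fin n))‖
  have hg : Continuous g :=
    continuous_ciSup_of_fintype fun d => (continuous_const.inner continuous_id).div_const _
  obtain ⟨u, hu, hmin⟩ := (isCompact_sphere (0 : EuclideanSpace ℝ (Fin n)) 1).exists_isMinOn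
    (NormedSpace.sphere_nonempty.2 zero_le_one) hg.continuousOn
  have hu0 : u ≠ 0 := ne_zero_of_mem_unit_sphere ⟨u, hu⟩
  have hgu : 0 < g u := by
    obtain ⟨d, hd, hdu⟩ := hD u hu0
    have hd0 : d ≠ 0 := by
      rintro rfl
      simp at hdu
    exact (div_pos hdu (norm_pos_iff.2 hd0)).trans_le (Finite.le_ciSup_of_le ⟨d, hd⟩ le_rfl)
  refine hgu.trans_le (le_ciInf fun ⟨v, hv⟩ => ?_)
  have hvn : 0 < ‖v‖ := norm_pos_iff.2 hv
  have hterm : (⨆ d : D, ⟪(d : EuclideanSpace ℝ (Fin n)), v⟫ /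
      (‖(d : EuclideanSpace ℝ (Fin n))‖ * ‖v‖)) = g (‖v‖⁻¹ • v) := by
    refine iSup_congr fun d => ?_
    rw [real_inner_smul_right]
    field_simp
  rw [hterm]
  refine hmin ?_
  simp [norm_smul, hvn.ne']

theorem cosMeasure_pos_iff (hn : 0 < n) :
    0 < cosMeasure D ↔ ∀ v ≠ 0, ∃ d ∈ D, 0 < ⟪d, v⟫ := by
  refine ⟨fun hD v hv => ?_, cosMeasure_pos_of_forall_exists_inner_pos hn⟩
  by_contra! h
  exact (cosMeasure_nonpos_of_forall_inner_nonpos hv h).not_gt hD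

end CosMeasure

theorem stmt2_general {n : ℕ} (hn : 0 < n) (D : Finset (EuclideanSpace ℝ (Fin n))) :
    0 < cosMeasure D ↔
      ∀ v : EuclideanSpace ℝ (Fin n), ∃ c : EuclideanSpace ℝ (Fin n) → ℝ,
        (∀ d ∈ D, 0 ≤ c d) ∧ v = ∑ d ∈ D, c d • d := by
  have hpos := PointedCone.hull_eq_top_iff_forall_exists_inner_pos
    (s := (D : Set (EuclideanSpace ℝ (Fin n))))
  simp only [Submodule.eq_top_iff', PointedCone.mem_hull_finset_iff, Finset.mem_coe] at hpos
  rw [cosMeasure_pos_iff hn, hpos]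

/-- a finite set of nonzero vectors in ℝⁿ (n ≥ 1) has positive cosine
measure iff every vector is a nonnegative linear combination of its elements
(i.e. it is a positive spanning set). -/
theorem stmt2 {n : ℕ} (hn : 0 < n) (D : Finset (EuclideanSpace ℝ (Fin n)))
    (hD0 : ∀ d ∈ D, d ≠ 0) :
    0 < cosMeasure D ↔
      ∀ v : EuclideanSpace ℝ (Fin n), ∃ c : EuclideanSpace ℝ (Fin n) → ℝ,
        (∀ d ∈ D, 0 ≤ c d) ∧ v = ∑ d ∈ D, c d • d :=
  stmt2_general hn D
end

section
/- Consider a direct-search method where at each iteration k either the iterate satisfies f(x_{k+1}) < f(x_k) - ρ(α_k) and α_{k+1} = γ·α_k (successful iteration), or x_{k+1} = x_k and α_{k+1} = θ·α_k (unsuccessful iteration), with 0 < θ < 1 ≤ γ. If f is bounded below and ρ(α) > 0 for all α > 0 with ρ nondecreasing, then α_k → 0 as k → ∞. -/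
/-- in a direct-search method with sufficient decrease
(`ρ(α) > 0` for `α > 0`, `ρ` nondecreasing), where successful iterations satisfy
`f(x_{k+1}) < f(x_k) - ρ(α_k)` with `α_{k+1} = γ α_k`, and unsuccessful iterations
keep the iterate and set `α_{k+1} = θ α_k` (`0 < θ < 1 ≤ γ`), if `f` is bounded
below then the stepsizes converge to zero. -/
theorem stmt4 {n : ℕ} (f : EuclideanSpace ℝ (Fin n) → ℝ) (fstar : ℝ)
    (hbound : ∀ y, fstar ≤ f y)
    (ρ : ℝ → ℝ) (hρpos : ∀ a, 0 < a → 0 < ρ a) (hρmono : Monotone ρ)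
    (θ γ : ℝ) (hθ0 : 0 < θ) (hθ1 : θ < 1) (hγ : 1 ≤ γ)
    (x : ℕ → EuclideanSpace ℝ (Fin n)) (α : ℕ → ℝ) (hα0 : 0 < α 0)
    (hstep : ∀ k, (f (x (k + 1)) < f (x k) - ρ (α k) ∧ α (k + 1) = γ * α k) ∨
                  (x (k + 1) = x k ∧ α (k + 1) = θ * α k)) :
    Filter.Tendsto α Filter.atTop (nhds 0) := by
  have hγ0 : (0:ℝ) < γ := lt_of_lt_of_le one_pos hγ
  have hαpos : ∀ k, 0 < α k := by
    intro k
    induction k with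
    | zero => exact hα0
    | succ k ih =>
      rcases hstep k with ⟨_, h⟩ | ⟨_, h⟩
      · rw [h]; positivity
      · rw [h]; positivity
  have hfmono : ∀ k, f (x (k+1)) ≤ f (x k) := by
    intro k
    rcases hstep k with ⟨h, _⟩ | ⟨h, _⟩
    · have := hρpos (α k) (hαpos k); linarith
    · rw [h]
  have hfanti : Antitone (fun k => f (x k)) := antitone_nat_of_succ_le hfmono
  -- finitely many "successful" iterations with α k ≥ ε
  have key : ∀ ε : ℝ, 0 < ε → ∃ K, ∀ k, K ≤ k →
      f (x (k+1)) < f (x k) - ρ (α k) → α k < ε := by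
    intro ε hε
    by_contra h
    push_neg at h
    choose g hg1 hg2 hg3 using h
    -- build strictly increasing sequence of successful iterations with big step
    set φ : ℕ → ℕ := fun N => Nat.rec (g 0) (fun _ p => g (p + 1)) N with hφ
    have hφ0 : φ 0 = g 0 := rfl
    have hφs : ∀ N, φ (N+1) = g (φ N + 1) := fun N => rfl
    have hφprop : ∀ N, f (x (φ N + 1)) < f (x (φ N)) - ρ (α (φ N)) ∧ ε ≤ α (φ N) := by
      intro N
      cases N with
      | zero => exact ⟨hg2 0, hg3 0⟩
      | succ N => exact ⟨hg2 _, hg3 _⟩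
    have hdec : ∀ N, f (x (φ N)) ≤ f (x (φ 0)) - N * ρ ε := by
      intro N
      induction N with
      | zero => simp
      | succ N ih =>
        have h1 : f (x (φ N + 1)) < f (x (φ N)) - ρ (α (φ N)) := (hφprop N).1
        have h2 : ρ ε ≤ ρ (α (φ N)) := hρmono (hφprop N).2
        have h3 : φ N + 1 ≤ φ (N+1) := by rw [hφs]; exact hg1 _
        have h4 : f (x (φ (N+1))) ≤ f (x (φ N + 1)) := hfanti h3
        have : (N+1 : ℕ) * ρ ε = N * ρ ε + ρ ε := by push_cast; ring
        rw [this]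
        linarith
    obtain ⟨N, hN⟩ := exists_nat_gt ((f (x (φ 0)) - fstar) / ρ ε)
    have hρε : 0 < ρ ε := hρpos ε hε
    have := hdec N
    have hb := hbound (x (φ N))
    have : (f (x (φ 0)) - fstar) / ρ ε < N := hN
    nlinarith [(div_lt_iff₀ hρε).mp hN]
  rw [Metric.tendsto_atTop]
  intro ε hε
  have hεγ : 0 < ε / γ := by positivity
  obtain ⟨K, hK⟩ := key (ε / γ) hεγ
  have hεγε : ε / γ ≤ ε := by
    rw [div_le_iff₀ hγ0]; nlinarith
  -- eventually α enters (0, ε)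
  have enter : ∃ m, K ≤ m ∧ α m < ε := by
    by_contra h
    push_neg at h
    have hall : ∀ j, α (K + j) = θ^j * α K := by
      intro j
      induction j with
      | zero => simp
      | succ j ih =>
        have hge : ε ≤ α (K + j) := h _ (Nat.le_add_right _ _)
        rcases hstep (K + j) with ⟨hd, _⟩ | ⟨_, hu⟩
        · have := hK (K + j) (Nat.le_add_right _ _) hd
          linarith
        · rw [show K + (j+1) = (K + j) + 1 from rfl, hu, ih]; ring
    have htend : Filter.Tendsto (fun j => θ^j * α K) Filter.atTop (nhds 0) := by
      have := (tendsto_pow_atTop_nhds_zero_of_lt_one hθ0.le hθ1).mul_const (α K)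
      simpa using this
    obtain ⟨j, hj⟩ := (htend.eventually (gt_mem_nhds hε)).exists
    have := h (K + j) (Nat.le_add_right _ _)
    rw [hall j] at this
    linarith
  obtain ⟨m, hm, hmε⟩ := enter
  refine ⟨m, fun k hk => ?_⟩
  have habs : ∀ k, m ≤ k → α k < ε := by
    intro k hk
    induction k with
    | zero => exact Nat.le_zero.mp hk ▸ hmε
    | succ k ih =>
      rcases Nat.lt_or_ge m (k+1) with h1 | h1
      · have hmk : m ≤ k := Nat.lt_succ_iff.mp h1
        have hkε : α k < ε := ih hmk
        rcases hstep k with ⟨hd, hu⟩ | ⟨_, hu⟩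
        · have hsmall : α k < ε / γ := hK k (le_trans hm hmk) hd
          rw [hu]
          calc γ * α k < γ * (ε / γ) := by
                exact mul_lt_mul_of_pos_left hsmall hγ0
            _ = ε := by field_simp
        · rw [hu]
          nlinarith [hαpos k]
      · have : m = k + 1 := le_antisymm hk h1
        exact this ▸ hmε
  have hlt := habs k hk
  have hpos := hαpos k
  simp only [Real.dist_eq, sub_zero]
  rwa [abs_of_pos hpos]
end

section
/- Let f: ℝⁿ → ℝ be Lipschitz continuous near a point x̂. Suppose (x_ℓ), (α_ℓ), (d_ℓ) are sequences with x_ℓ → x̂, α_ℓ → 0⁺, d_ℓ → d ≠ 0 (with ‖d_ℓ‖ bounded between positive constants), and f(x_ℓ + α_ℓ d_ℓ) - f(x_ℓ) ≥ -ρ(α_ℓ) for all ℓ, where ρ(α)/α → 0 as α → 0⁺. Then the Clarke directional derivative satisfies f°(x̂; d) ≥ 0. -/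
/-!
Along the sequence `(x_ℓ, α_ℓ)`, which converges to `(x̂, 0⁺)`, the difference quotient of `f` in
direction `d` differs from the one in direction `d_ℓ` by at most `L ‖d_ℓ - d‖`, and the latter
quotient is at least `-ρ(α_ℓ)/α_ℓ`. Both error terms tend to `0`, so the difference quotients in
direction `d` are frequently above any negative number near `(x̂, 0⁺)`; since they are bounded
above by `L ‖d‖` there, their limsup is nonnegative.
-/

/-- The Clarke generalized directional derivative
`f°(x; v) = limsup_{y → x, t → 0⁺} (f(y + t v) - f(y))/t`. -/
noncomputable def clarkeDeriv {n : ℕ} (f : EuclideanSpace ℝ (Fin n) → ℝ)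
    (x v : EuclideanSpace ℝ (Fin n)) : ℝ :=
  Filter.limsup (fun p : EuclideanSpace ℝ (Fin n) × ℝ => (f (p.1 + p.2 • v) - f p.1) / p.2)
    ((nhds x) ×ˢ (nhdsWithin 0 (Set.Ioi 0)))

open Filter Topology Metric

theorem Filter.le_limsup_of_tendsto_of_eventually_le {ι α : Type*} {l : Filter ι} [l.NeBot]
    {F : Filter α} {g : α → ℝ} {p : ι → α} {h : ι → ℝ} {c : ℝ} (hp : Tendsto p l F)
    (hh : Tendsto h l (𝓝 c)) (hle : ∀ᶠ i in l, h i ≤ g (p i))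
    (hg : IsBoundedUnder (· ≤ ·) F g) : c ≤ limsup g F := by
  refine le_of_forall_lt_imp_le_of_dense fun b hb ↦ le_limsup_of_frequently_le ?_ hg
  have hb_le : ∀ᶠ i in l, b ≤ g (p i) := by
    filter_upwards [hh.eventually (eventually_gt_nhds hb), hle] with i hbi hi
    exact hbi.le.trans hi
  exact hp.frequently hb_le.frequently

section DifferenceQuotient

variable {E : Type*} [SeminormedAddCommGroup E] [NormedSpace ℝ E] {f : E → ℝ} {x : E} {L r : ℝ}

theorem diffQuot_sub_diffQuot_le
    (hlip : ∀ y ∈ ball x r, ∀ z ∈ ball x r, |f y - f z| ≤ L * ‖y - z‖)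
    {y u v : E} {t : ℝ} (ht : 0 < t) (hu : y + t • u ∈ ball x r) (hv : y + t • v ∈ ball x r) :
    (f (y + t • u) - f y) / t - (f (y + t • v) - f y) / t ≤ L * ‖u - v‖ := by
  rw [← sub_div, sub_sub_sub_cancel_right, div_le_iff₀ ht]
  calc f (y + t • u) - f (y + t • v) ≤ L * ‖(y + t • u) - (y + t • v)‖ :=
        (le_abs_self _).trans (hlip _ hu _ hv)
    _ = L * ‖u - v‖ * t := by
        rw [add_sub_add_left_eq_sub, ← smul_sub, norm_smul, Real.norm_of_nonneg ht.le]; ring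

theorem isBoundedUnder_diffQuot (hr : 0 < r)
    (hlip : ∀ y ∈ ball x r, ∀ z ∈ ball x r, |f y - f z| ≤ L * ‖y - z‖) (v : E) :
    IsBoundedUnder (· ≤ ·) (𝓝 x ×ˢ 𝓝[>] 0) fun p : E × ℝ ↦ (f (p.1 + p.2 • v) - f p.1) / p.2 := by
  have hshift : Tendsto (fun p : E × ℝ ↦ p.1 + p.2 • v) (𝓝 x ×ˢ 𝓝[>] 0) (𝓝 x) := by
    have hfst : Tendsto Prod.fst (𝓝 x ×ˢ 𝓝[>] (0 : ℝ)) (𝓝 x) := tendsto_fst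
    have hsnd : Tendsto Prod.snd (𝓝 x ×ˢ 𝓝[>] (0 : ℝ)) (𝓝 0) :=
      tendsto_snd.mono_right nhdsWithin_le_nhds
    simpa using hfst.add (hsnd.smul_const v)
  refine ⟨L * ‖v‖, eventually_map.2 ?_⟩
  filter_upwards [tendsto_fst.eventually (ball_mem_nhds x hr),
    hshift.eventually (ball_mem_nhds x hr),
    tendsto_snd.eventually self_mem_nhdsWithin] with p hy hyv (ht : 0 < p.2)
  simpa using diffQuot_sub_diffQuot_le hlip ht hyv
    (show p.1 + p.2 • (0 : E) ∈ ball x r by simpa using hy)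

end DifferenceQuotient

theorem stmt7_general {n : ℕ} (f : EuclideanSpace ℝ (Fin n) → ℝ)
    (xhat : EuclideanSpace ℝ (Fin n)) (L r : ℝ) (hr : 0 < r)
    (hlip : ∀ y ∈ Metric.ball xhat r, ∀ z ∈ Metric.ball xhat r, |f y - f z| ≤ L * ‖y - z‖)
    (xs : ℕ → EuclideanSpace ℝ (Fin n)) (αs : ℕ → ℝ)
    (ds : ℕ → EuclideanSpace ℝ (Fin n)) (d : EuclideanSpace ℝ (Fin n))
    (hxs : Filter.Tendsto xs Filter.atTop (nhds xhat))
    (hαpos : ∀ ℓ, 0 < αs ℓ)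
    (hαs : Filter.Tendsto αs Filter.atTop (nhds 0))
    (hds : Filter.Tendsto ds Filter.atTop (nhds d))
    (ρ : ℝ → ℝ)
    (hρo : Filter.Tendsto (fun a => ρ a / a) (nhdsWithin 0 (Set.Ioi 0)) (nhds 0))
    (hfail : ∀ ℓ, -ρ (αs ℓ) ≤ f (xs ℓ + αs ℓ • ds ℓ) - f (xs ℓ)) :
    0 ≤ clarkeDeriv f xhat d := by
  have hα : Tendsto αs atTop (𝓝[>] 0) := tendsto_nhdsWithin_iff.2 ⟨hαs, .of_forall hαpos⟩
  have hsteps : Tendsto (fun ℓ ↦ xs ℓ + αs ℓ • ds ℓ) atTop (𝓝 xhat) := by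
    simpa using hxs.add (hαs.smul hds)
  have hsteps_d : Tendsto (fun ℓ ↦ xs ℓ + αs ℓ • d) atTop (𝓝 xhat) := by
    simpa using hxs.add (hαs.smul_const d)
  have herr : Tendsto (fun ℓ ↦ -(ρ (αs ℓ) / αs ℓ) - L * ‖ds ℓ - d‖) atTop (𝓝 0) := by
    simpa using (hρo.comp hα).neg.sub ((tendsto_sub_nhds_zero_iff.2 hds).norm.const_mul L)
  refine le_limsup_of_tendsto_of_eventually_le (hxs.prodMk hα) herr ?_
    (isBoundedUnder_diffQuot hr hlip d)
  filter_upwards [hsteps.eventually (ball_mem_nhds xhat hr),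
    hsteps_d.eventually (ball_mem_nhds xhat hr)] with ℓ hu hv
  have hquot := diffQuot_sub_diffQuot_le hlip (hαpos ℓ) hu hv
  have hdec : -(ρ (αs ℓ) / αs ℓ) ≤ (f (xs ℓ + αs ℓ • ds ℓ) - f (xs ℓ)) / αs ℓ := by
    rw [← neg_div]; exact div_le_div_of_nonneg_right (hfail ℓ) (hαpos ℓ).le
  linarith

/-- refining-sequence lemma. If `f` is Lipschitz near `xhat`, the points
`x_ℓ → xhat`, stepsizes `α_ℓ → 0⁺`, directions `d_ℓ → d ≠ 0` with norms bounded between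
positive constants, sufficient decrease fails at every `ℓ`, and `ρ(α)/α → 0` as
`α → 0⁺`, then `f°(xhat; d) ≥ 0`. -/
theorem stmt7 {n : ℕ} (f : EuclideanSpace ℝ (Fin n) → ℝ)
    (xhat : EuclideanSpace ℝ (Fin n)) (L r : ℝ) (hr : 0 < r) (hL : 0 ≤ L)
    (hlip : ∀ y ∈ Metric.ball xhat r, ∀ z ∈ Metric.ball xhat r, |f y - f z| ≤ L * ‖y - z‖)
    (xs : ℕ → EuclideanSpace ℝ (Fin n)) (αs : ℕ → ℝ)
    (ds : ℕ → EuclideanSpace ℝ (Fin n)) (d : EuclideanSpace ℝ (Fin n)) (hd : d ≠ 0)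
    (dmin dmax : ℝ) (hdmin : 0 < dmin)
    (hdb : ∀ ℓ, dmin ≤ ‖ds ℓ‖ ∧ ‖ds ℓ‖ ≤ dmax)
    (hxs : Filter.Tendsto xs Filter.atTop (nhds xhat))
    (hαpos : ∀ ℓ, 0 < αs ℓ)
    (hαs : Filter.Tendsto αs Filter.atTop (nhds 0))
    (hds : Filter.Tendsto ds Filter.atTop (nhds d))
    (ρ : ℝ → ℝ) (hρ : ∀ a, 0 ≤ ρ a)
    (hρo : Filter.Tendsto (fun a => ρ a / a) (nhdsWithin 0 (Set.Ioi 0)) (nhds 0))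
    (hfail : ∀ ℓ, -ρ (αs ℓ) ≤ f (xs ℓ + αs ℓ • ds ℓ) - f (xs ℓ)) :
    0 ≤ clarkeDeriv f xhat d :=
  stmt7_general f xhat L r hr hlip xs αs ds d hxs hαpos hαs hds ρ hρo hfail
end
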